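/- Let n, k ∈ ℝ³ and Θ ∈ ℝ. If ⟨n,n⟩ = −1 then Tr(exp(Θ J(n))) = 1 + 2 cos Θ; if ⟨n,n⟩ = +1 then Tr(exp(Θ J(n))) = 1 + 2 cosh Θ; and if ⟨k,k⟩ = 0 then Tr(exp(J(k))) = 3. -/

import Mathlib

/-! With `δ = ⟨u,u⟩`, `J(u)` satisfies `tr J(u) = 0`, `tr J(u)² = 2δ` and `J(u)³ = δ J(u)`
(its characteristic polynomial is `X³ - δX`). Hence the odd powers of
`A = Θ J(u)` are traceless and `tr A^(2j) = 2 (Θ²δ)^j + [j = 0]`, so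
`tr exp A = 1 + 2 ∑ (Θ²δ)^j / (2j)!`, which is `1 + 2 cos Θ` for `δ = -1`, `1 + 2 cosh Θ` for
`δ = 1`, and `3` for `δ = 0`. -/

open Matrix

noncomputable section

/-- Tangent metric `η_T = diag(-1,1,1)` on `ℝ³`. -/
def etaT : Matrix (Fin 3) (Fin 3) ℝ := Matrix.diagonal ![-1, 1, 1]

/-- Tangent bilinear form `⟨u,w⟩ = uᵀ η_T w`. -/
def ipT (u w : Fin 3 → ℝ) : ℝ := u ⬝ᵥ (etaT *ᵥ w)

/-- The map `J : ℝ³ → M₃(ℝ)` implementing the Lorentzian cross product, `J(u)w = u × w`. -/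
def Jmat (u : Fin 3 → ℝ) : Matrix (Fin 3) (Fin 3) ℝ :=
  !![0, u 2, -u 1; u 2, 0, -u 0; -u 1, u 0, 0]

open NormedSpace Nat

section

attribute [local instance] Matrix.linftyOpNormedRing Matrix.linftyOpNormedAlgebra

theorem Matrix.hasSum_trace_exp {m 𝕂 : Type*} [Fintype m] [DecidableEq m] [RCLike 𝕂]
    (A : Matrix m m 𝕂) : HasSum (fun n => (A ^ n).trace / n !) (exp A).trace := by
  have := (exp_series_hasSum_exp' (𝕂 := 𝕂) A).map (Matrix.traceAddMonoidHom m 𝕂)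
    continuous_id.matrix_trace
  convert this using 1
  · ext n
    simp [Matrix.trace_smul, div_eq_inv_mul]
  · rfl

end

theorem pow_two_mul_add_succ_of_pow_three {R A : Type*} [CommSemiring R] [Semiring A]
    [Algebra R A] {a : A} {δ : R} (ha : a ^ 3 = δ • a) (j k : ℕ) :
    a ^ (2 * j + k + 1) = δ ^ j • a ^ (k + 1) := by
  induction j generalizing k with
  | zero => simp
  | succ j ih =>
    calc a ^ (2 * (j + 1) + k + 1) = a ^ (2 * j + (k + 2) + 1) := by ring_nf
      _ = δ ^ j • (a ^ k * a ^ 3) := by rw [ih, ← pow_add]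
      _ = δ ^ (j + 1) • a ^ (k + 1) := by
        rw [ha, mul_smul_comm, smul_smul, pow_succ, pow_succ]

theorem trace_exp_of_pow_three_eq_smul (A : Matrix (Fin 3) (Fin 3) ℝ) {δ C : ℝ}
    (htr : A.trace = 0) (htr_sq : (A ^ 2).trace = 2 * δ) (hcube : A ^ 3 = δ • A)
    (hC : HasSum (fun j : ℕ => δ ^ j / (2 * j) !) C) :
    (exp A).trace = 1 + 2 * C := by
  have hodd : HasSum (fun j : ℕ => (A ^ (2 * j + 1)).trace / (2 * j + 1) !) 0 := by
    convert hasSum_zero with j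
    rw [pow_two_mul_add_succ_of_pow_three hcube j 0, pow_one, Matrix.trace_smul, htr,
      smul_zero, zero_div]
  have heven : HasSum (fun j : ℕ => (A ^ (2 * j)).trace / (2 * j) !) (1 + 2 * C) := by
    convert (hasSum_ite_eq 0 (1 : ℝ)).add (hC.mul_left 2) using 1
    ext (_ | j)
    · norm_num [Matrix.trace_one]
    · rw [mul_add, pow_two_mul_add_succ_of_pow_three hcube j 1, Matrix.trace_smul, htr_sq]
      simp only [smul_eq_mul, Nat.succ_ne_zero, if_false]
      ring
  have := (HasSum.even_add_odd (f := fun n => (A ^ n).trace / n !) heven hodd).unique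
    (Matrix.hasSum_trace_exp A)
  rw [add_zero] at this
  exact this.symm

theorem trace_Jmat (u : Fin 3 → ℝ) : (Jmat u).trace = 0 := by
  simp [Jmat, Matrix.trace_fin_three]

theorem ipT_self (u : Fin 3 → ℝ) : ipT u u = -u 0 ^ 2 + u 1 ^ 2 + u 2 ^ 2 := by
  simp [ipT, etaT, dotProduct, Matrix.mulVec, Fin.sum_univ_three, Matrix.diagonal]
  ring

theorem trace_Jmat_sq (u : Fin 3 → ℝ) : (Jmat u ^ 2).trace = 2 * ipT u u := by
  simp [ipT_self, Jmat, sq, Matrix.trace_fin_three]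
  ring

theorem Jmat_pow_three (u : Fin 3 → ℝ) : Jmat u ^ 3 = ipT u u • Jmat u := by
  ext i j
  fin_cases i <;> fin_cases j <;>
    simp [ipT_self, Jmat, pow_succ, Matrix.mul_apply, Fin.sum_univ_three] <;> ring

theorem trace_exp_smul_Jmat (u : Fin 3 → ℝ) (Θ : ℝ) {C : ℝ}
    (hC : HasSum (fun j : ℕ => (Θ ^ 2 * ipT u u) ^ j / (2 * j) !) C) :
    (exp (Θ • Jmat u)).trace = 1 + 2 * C := by
  refine trace_exp_of_pow_three_eq_smul _ ?_ ?_ ?_ hC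
  · rw [Matrix.trace_smul, trace_Jmat, smul_zero]
  · rw [smul_pow, Matrix.trace_smul, trace_Jmat_sq, smul_eq_mul]
    ring
  · rw [smul_pow, Jmat_pow_three, smul_smul, smul_smul]
    ring_nf

/-- Traces of face holonomies: `Tr exp(Θ J(n)) = 1 + 2cos Θ` for timelike `n`,
`1 + 2cosh Θ` for spacelike `n`, and `Tr exp(J(k)) = 3` for null `k`. -/
theorem trace_exp_J (n k : Fin 3 → ℝ) (Θ : ℝ) :
    (ipT n n = -1 → (NormedSpace.exp (Θ • Jmat n)).trace = 1 + 2 * Real.cos Θ) ∧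
    (ipT n n = 1 → (NormedSpace.exp (Θ • Jmat n)).trace = 1 + 2 * Real.cosh Θ) ∧
    (ipT k k = 0 → (NormedSpace.exp (Jmat k)).trace = 3) := by
  refine ⟨fun h => trace_exp_smul_Jmat n Θ ?_, fun h => trace_exp_smul_Jmat n Θ ?_, fun h => ?_⟩
  · convert Real.hasSum_cos Θ using 2 with j
    rw [h]
    ring
  · convert Real.hasSum_cosh Θ using 2 with j
    rw [h, mul_one, pow_mul]
  · have hC : HasSum (fun j : ℕ => ((1 : ℝ) ^ 2 * ipT k k) ^ j / (2 * j) !) 1 := by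
      simpa [h, pow_mul] using Real.hasSum_cosh 0
    rw [← one_smul ℝ (Jmat k), trace_exp_smul_Jmat k 1 hC]
    norm_num
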